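/- Let T be a well-separated tree metric, let x, y be strings of length at most n over T, and let s_r(x), s_r(y) be their r-simplifications. If dtw(x, y) > nr, then dtw(s_r(x), s_r(y)) > nr/2. -/

import Mathlib

/-!
Letterwise, `d(u, v) ≤ max (d(s_r u, s_r v)) (r / 4)`: `s_r` climbs from each letter along
edges of weight at most `r / 4`, so a path between `s_r u` and `s_r v` extends to one between
`u` and `v` whose heaviest edge grows to at most `r / 4`. A correspondence of `s_r(x)` and
`s_r(y)` can be shortened to length at most `|x| + |y| ≤ 2n` without increasing its cost, and
it is the image of a correspondence of `x` and `y` of the same length, which therefore costs at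
most `2n · r / 4 = nr / 2` more. Hence `dtw(x, y) ≤ dtw(s_r(x), s_r(y)) + nr / 2`.
-/

/-- `xb` is an expansion of `x`: each letter of `x` is duplicated in place a positive
number of times. -/
def IsExpansion {α : Type*} (x xb : List α) : Prop :=
  ∃ ks : List ℕ, ks.length = x.length ∧ (∀ k ∈ ks, 0 < k) ∧
    xb = (List.zipWith (fun a k => List.replicate k a) x ks).flatten

/-- `(xb, yb)` is a correspondence between `x` and `y`: a pair of equal-length expansions. -/
def IsCorrespondence {α : Type*} (x y xb yb : List α) : Prop :=
  IsExpansion x xb ∧ IsExpansion y yb ∧ xb.length = yb.length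

/-- The cost of a correspondence: summed distances of aligned letters. -/
noncomputable def corrCost {α : Type*} (δ : α → α → ℝ) (xb yb : List α) : ℝ :=
  (List.zipWith δ xb yb).sum

/-- Dynamic time warping distance with respect to a distance function `δ`. -/
noncomputable def dtw {α : Type*} (δ : α → α → ℝ) (x y : List α) : ℝ :=
  sInf {c | ∃ xb yb, IsCorrespondence x y xb yb ∧ c = corrCost δ xb yb}

/-- Generalized Hamming distance on letters. -/
noncomputable def hamDist {α : Type*} [DecidableEq α] (a b : α) : ℝ := if a = b then 0 else 1

/-- DTW over generalized Hamming space. -/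
noncomputable def dtw0 {α : Type*} [DecidableEq α] (x y : List α) : ℝ := dtw hamDist x y

/-- A well-separated tree metric: a rooted tree on Σ with positive edge weights
(`w v` is the weight of the edge from `v` to its parent) that are non-increasing
along root-to-leaf paths. -/
structure WSTree (σ : Type*) where
  root : σ
  par : σ → σ
  w : σ → ℝ
  depth : σ → ℕ
  depth_root : depth root = 0
  root_of_depth : ∀ v, depth v = 0 → v = root
  par_root : par root = root
  depth_par : ∀ v, v ≠ root → depth (par v) + 1 = depth v
  w_pos : ∀ v, v ≠ root → 0 < w v
  w_mono : ∀ v, v ≠ root → par v ≠ root → w v ≤ w (par v)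

/-- The k-th iterated ancestor of v. -/
def WSTree.anc {σ : Type*} (T : WSTree σ) (v : σ) : ℕ → σ
  | 0 => v
  | k + 1 => T.par (T.anc v k)

/-- The maximum weight among the first k edges on the path from v towards the root. -/
noncomputable def WSTree.upMax {σ : Type*} (T : WSTree σ) (v : σ) : ℕ → ℝ
  | 0 => 0
  | k + 1 => max (T.upMax v k) (T.w (T.anc v k))

/-- The well-separated tree metric distance: the maximum edge weight on the tree path
between u and v (minimized over common ancestors through which the path may pass). -/
noncomputable def WSTree.tdist {σ : Type*} (T : WSTree σ) (u v : σ) : ℝ :=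
  sInf {c | ∃ j k, T.anc u j = T.anc v k ∧ c = max (T.upMax u j) (T.upMax v k)}

/-- The number of steps up from v to its highest ancestor reachable via edges of
weight at most r/4. -/
noncomputable def WSTree.srIdx {σ : Type*} (T : WSTree σ) (r : ℝ) (v : σ) : ℕ :=
  sSup {k | k ≤ T.depth v ∧ ∀ i < k, T.w (T.anc v i) ≤ r / 4}

/-- The r-simplification on letters: the highest ancestor of v reachable from v via
edges of weight at most r/4. -/
noncomputable def WSTree.sr {σ : Type*} (T : WSTree σ) (r : ℝ) (v : σ) : σ :=
  T.anc v (T.srIdx r v)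

namespace WSTree

variable {σ : Type*} (T : WSTree σ)

theorem anc_add (v : σ) (i j : ℕ) : T.anc v (i + j) = T.anc (T.anc v i) j := by
  induction j with
  | zero => rfl
  | succ j ih => rw [← Nat.add_assoc]; simp only [anc, ih]

theorem upMax_nonneg (v : σ) (k : ℕ) : 0 ≤ T.upMax v k := by
  induction k with
  | zero => exact le_rfl
  | succ k ih => exact le_max_of_le_left ih

theorem upMax_add (v : σ) (i j : ℕ) :
    T.upMax v (i + j) = max (T.upMax v i) (T.upMax (T.anc v i) j) := by
  induction j with
  | zero => simp [upMax, upMax_nonneg]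
  | succ j ih => rw [← Nat.add_assoc]; simp only [upMax, ih, anc_add, max_assoc]

theorem upMax_le {v : σ} {m : ℕ} {c : ℝ} (hc : 0 ≤ c) (h : ∀ i < m, T.w (T.anc v i) ≤ c) :
    T.upMax v m ≤ c := by
  induction m with
  | zero => exact hc
  | succ m ih =>
    exact max_le (ih fun i hi => h i (Nat.lt_succ_of_lt hi)) (h m (Nat.lt_succ_self m))

theorem anc_depth (v : σ) : T.anc v (T.depth v) = T.root := by
  induction hd : T.depth v generalizing v with
  | zero => exact T.root_of_depth v hd
  | succ d ih =>
    have hv : v ≠ T.root := by rintro rfl; simp [T.depth_root] at hd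
    have hpar : T.depth (T.par v) = d := by have := T.depth_par v hv; omega
    rw [Nat.add_comm, anc_add]
    exact ih (T.par v) hpar

theorem tdist_le_of_anc_eq {u v : σ} {j k : ℕ} (h : T.anc u j = T.anc v k) :
    T.tdist u v ≤ max (T.upMax u j) (T.upMax v k) :=
  csInf_le ⟨0, by rintro _ ⟨j, k, -, rfl⟩; exact le_max_of_le_left (T.upMax_nonneg u j)⟩
    ⟨j, k, h, rfl⟩

theorem le_tdist {u v : σ} {c : ℝ}
    (h : ∀ j k, T.anc u j = T.anc v k → c ≤ max (T.upMax u j) (T.upMax v k)) :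
    c ≤ T.tdist u v :=
  le_csInf ⟨_, T.depth u, T.depth v, by rw [anc_depth, anc_depth], rfl⟩
    (by rintro _ ⟨j, k, hjk, rfl⟩; exact h j k hjk)

theorem tdist_nonneg (u v : σ) : 0 ≤ T.tdist u v :=
  T.le_tdist fun j _ _ => le_max_of_le_left (T.upMax_nonneg u j)

theorem tdist_le_max_tdist_anc (u v : σ) (i j : ℕ) :
    T.tdist u v ≤ max (max (T.upMax u i) (T.upMax v j)) (T.tdist (T.anc u i) (T.anc v j)) := by
  set A := max (T.upMax u i) (T.upMax v j)
  rcases le_or_gt (T.tdist u v) A with hA | hA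
  · exact le_max_of_le_left hA
  refine le_max_of_le_right (T.le_tdist fun j' k' hjk => ?_)
  have hpath := T.tdist_le_of_anc_eq (j := i + j') (k := j + k') (by rwa [anc_add, anc_add])
  rw [upMax_add, upMax_add] at hpath
  have hsplit : T.tdist u v ≤ max A (max (T.upMax (T.anc u i) j') (T.upMax (T.anc v j) k')) :=
    hpath.trans_eq (max_max_max_comm _ _ _ _)
  exact (le_max_iff.mp hsplit).resolve_left hA.not_ge

theorem srIdx_spec (r : ℝ) (v : σ) :
    T.srIdx r v ≤ T.depth v ∧ ∀ i < T.srIdx r v, T.w (T.anc v i) ≤ r / 4 :=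
  Nat.sSup_mem (s := {k | k ≤ T.depth v ∧ ∀ i < k, T.w (T.anc v i) ≤ r / 4})
    ⟨0, by simp⟩ ⟨T.depth v, fun _ hk => hk.1⟩

theorem tdist_le_max_tdist_sr {r : ℝ} (hr : 0 ≤ r) (u v : σ) :
    T.tdist u v ≤ max (T.tdist (T.sr r u) (T.sr r v)) (r / 4) := by
  have hu := T.upMax_le (by positivity) (T.srIdx_spec r u).2
  have hv := T.upMax_le (by positivity) (T.srIdx_spec r v).2
  calc T.tdist u v
      ≤ max (max (T.upMax u (T.srIdx r u)) (T.upMax v (T.srIdx r v)))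
          (T.tdist (T.sr r u) (T.sr r v)) := T.tdist_le_max_tdist_anc u v _ _
    _ ≤ max (T.tdist (T.sr r u) (T.sr r v)) (r / 4) := by
      rw [max_comm]; gcongr; exact max_le hu hv

end WSTree

section Warping

variable {α β : Type*}

theorem map_flatten_zipWith_replicate (f : α → β) (x : List α) (ks : List ℕ) :
    ((List.zipWith (fun a k => List.replicate k a) x ks).flatten).map f =
      (List.zipWith (fun a k => List.replicate k a) (x.map f) ks).flatten := by
  simp [List.map_flatten, List.zipWith_map_left, List.map_zipWith]

namespace IsExpansion

theorem cons_cons {a : α} {x xb : List α} (h : IsExpansion x xb) :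
    IsExpansion (a :: x) (a :: xb) := by
  obtain ⟨ks, hlen, hpos, rfl⟩ := h
  refine ⟨1 :: ks, by simpa using hlen, ?_, by simp⟩
  simpa using hpos

theorem cons_dup {a : α} {x xb : List α} (h : IsExpansion (a :: x) xb) :
    IsExpansion (a :: x) (a :: xb) := by
  obtain ⟨_ | ⟨k, ks⟩, hlen, hpos, rfl⟩ := h
  · simp at hlen
  refine ⟨(k + 1) :: ks, by simpa using hlen, ?_, by simp [List.replicate_succ]⟩
  simp only [List.mem_cons, forall_eq_or_imp] at hpos ⊢
  exact ⟨k.succ_pos, hpos.2⟩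

/-- The first letter of `xb` either ends its block (then `xb` expands `x₁`) or not. -/
theorem exists_of_cons_right {c : α} {x xb : List α} (h : IsExpansion x (c :: xb)) :
    ∃ x₁, x = c :: x₁ ∧ (IsExpansion x₁ xb ∨ IsExpansion (c :: x₁) xb) := by
  obtain ⟨ks, hlen, hpos, hflat⟩ := h
  rcases x with _ | ⟨a, x₁⟩ <;> rcases ks with _ | ⟨k, ks⟩
  · simp at hflat
  · simp at hlen
  · simp at hlen
  simp only [List.mem_cons, forall_eq_or_imp] at hpos
  obtain ⟨k, rfl⟩ := Nat.exists_eq_add_of_lt hpos.1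
  simp only [zero_add, List.zipWith_cons_cons, List.flatten_cons, List.replicate_succ,
    List.cons_append, List.cons.injEq] at hflat
  obtain ⟨rfl, rfl⟩ := hflat
  refine ⟨x₁, rfl, ?_⟩
  rcases Nat.eq_zero_or_pos k with rfl | hk
  · exact Or.inl ⟨ks, by simpa using hlen, hpos.2, by simp⟩
  · refine Or.inr ⟨k :: ks, by simpa using hlen, ?_, by simp⟩
    simpa using ⟨hk, hpos.2⟩

theorem map (f : α → β) {x xb : List α} (h : IsExpansion x xb) :
    IsExpansion (x.map f) (xb.map f) := by
  obtain ⟨ks, hlen, hpos, rfl⟩ := h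
  exact ⟨ks, by simpa using hlen, hpos, map_flatten_zipWith_replicate f x ks⟩

theorem exists_of_map {f : α → β} {x : List α} {ub : List β} (h : IsExpansion (x.map f) ub) :
    ∃ xb, IsExpansion x xb ∧ ub = xb.map f := by
  obtain ⟨ks, hlen, hpos, rfl⟩ := h
  exact ⟨_, ⟨ks, by simpa using hlen, hpos, rfl⟩, (map_flatten_zipWith_replicate f x ks).symm⟩

end IsExpansion

namespace IsCorrespondence

theorem map (f : α → β) {x y xb yb : List α} (h : IsCorrespondence x y xb yb) :
    IsCorrespondence (x.map f) (y.map f) (xb.map f) (yb.map f) :=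
  ⟨h.1.map f, h.2.1.map f, by simpa using h.2.2⟩

theorem exists_of_map {f : α → β} {x y : List α} {ub vb : List β}
    (h : IsCorrespondence (x.map f) (y.map f) ub vb) :
    ∃ xb yb, IsCorrespondence x y xb yb ∧ ub = xb.map f ∧ vb = yb.map f := by
  obtain ⟨xb, hx, rfl⟩ := h.1.exists_of_map
  obtain ⟨yb, hy, rfl⟩ := h.2.1.exists_of_map
  exact ⟨xb, yb, ⟨hx, hy, by simpa using h.2.2⟩, rfl, rfl⟩

end IsCorrespondence

theorem corrCost_cons (δ : α → α → ℝ) (a b : α) (xb yb : List α) :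
    corrCost δ (a :: xb) (b :: yb) = δ a b + corrCost δ xb yb := by
  simp [corrCost]

theorem corrCost_map (δ : β → β → ℝ) (f : α → β) (xb yb : List α) :
    corrCost δ (xb.map f) (yb.map f) = corrCost (fun a b => δ (f a) (f b)) xb yb := by
  simp [corrCost, List.zipWith_map]

theorem corrCost_nonneg {δ : α → α → ℝ} (hδ : ∀ a b, 0 ≤ δ a b) :
    ∀ xb yb : List α, 0 ≤ corrCost δ xb yb
  | [], _ => by simp [corrCost]
  | _ :: _, [] => by simp [corrCost]
  | a :: xb, b :: yb => by
    rw [corrCost_cons]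
    exact add_nonneg (hδ a b) (corrCost_nonneg hδ xb yb)

theorem corrCost_le_corrCost_add {δ δ' : α → α → ℝ} {ε : ℝ} (h : ∀ a b, δ a b ≤ δ' a b + ε) :
    ∀ {xb yb : List α}, xb.length = yb.length →
      corrCost δ xb yb ≤ corrCost δ' xb yb + xb.length * ε
  | [], [], _ => by simp [corrCost]
  | a :: xb, b :: yb, hlen => by
    have := corrCost_le_corrCost_add h (xb := xb) (yb := yb) (by simpa using hlen)
    rw [corrCost_cons, corrCost_cons, List.length_cons, Nat.cast_succ]
    linarith [h a b]

/-- Deleting an aligned pair in which both letters repeat their predecessors keeps a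
correspondence, so every step of a minimal one advances in `x` or in `y`. -/
theorem IsCorrespondence.exists_length_le {δ : α → α → ℝ} (hδ : ∀ a b, 0 ≤ δ a b)
    {x y xb yb : List α} (h : IsCorrespondence x y xb yb) :
    ∃ xb' yb', IsCorrespondence x y xb' yb' ∧ xb'.length ≤ x.length + y.length ∧
      corrCost δ xb' yb' ≤ corrCost δ xb yb := by
  obtain ⟨hx, hy, hlen⟩ := h
  induction xb generalizing x y yb with
  | nil =>
    obtain rfl := List.length_eq_zero_iff.mp hlen.symm
    exact ⟨[], [], ⟨hx, hy, rfl⟩, by simp, le_rfl⟩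
  | cons a xb ih =>
    obtain ⟨b, yb, rfl⟩ := List.exists_cons_of_length_eq_add_one hlen.symm
    obtain ⟨x₁, rfl, hx₁ | hx₁⟩ := hx.exists_of_cons_right <;>
    obtain ⟨y₁, rfl, hy₁ | hy₁⟩ := hy.exists_of_cons_right <;>
    obtain ⟨xb', yb', ⟨hx', hy', hl'⟩, hlen', hcost'⟩ := ih hx₁ hy₁ (by simpa using hlen)
    case inr.inr =>
      exact ⟨xb', yb', ⟨hx', hy', hl'⟩, hlen', by rw [corrCost_cons]; linarith [hδ a b]⟩
    all_goals
      refine ⟨a :: xb', b :: yb', ⟨?_, ?_, by simp [hl']⟩, by simp at hlen' ⊢; omega,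
        by rw [corrCost_cons, corrCost_cons]; linarith⟩
        <;> first
          | exact hx'.cons_cons | exact hx'.cons_dup | exact hy'.cons_cons | exact hy'.cons_dup

theorem dtw_le_corrCost {δ : α → α → ℝ} (hδ : ∀ a b, 0 ≤ δ a b) {x y xb yb : List α}
    (h : IsCorrespondence x y xb yb) : dtw δ x y ≤ corrCost δ xb yb :=
  csInf_le ⟨0, by rintro _ ⟨xb, yb, -, rfl⟩; exact corrCost_nonneg hδ xb yb⟩ ⟨xb, yb, h, rfl⟩

theorem le_dtw {δ : α → α → ℝ} {x y : List α} {c : ℝ}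
    (hxy : ∃ xb yb, IsCorrespondence x y xb yb)
    (h : ∀ xb yb, IsCorrespondence x y xb yb → c ≤ corrCost δ xb yb) : c ≤ dtw δ x y := by
  obtain ⟨xb, yb, hc⟩ := hxy
  exact le_csInf ⟨_, xb, yb, hc, rfl⟩ (by rintro _ ⟨xb, yb, hc, rfl⟩; exact h xb yb hc)

theorem dtw_eq_zero_of_forall_not {δ : α → α → ℝ} {x y : List α}
    (h : ∀ xb yb, ¬ IsCorrespondence x y xb yb) : dtw δ x y = 0 := by
  simp [dtw, h]

/-- Only correspondences of length at most `|x| + |y|` matter, and these lift along `f`. -/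
theorem dtw_le_dtw_map_add {δ : α → α → ℝ} {δ' : β → β → ℝ} {f : α → β} {ε : ℝ}
    (hδ : ∀ a b, 0 ≤ δ a b) (hδ' : ∀ a b, 0 ≤ δ' a b) (hε : 0 ≤ ε)
    (hf : ∀ a b, δ a b ≤ δ' (f a) (f b) + ε) {x y : List α}
    (hxy : ∃ xb yb, IsCorrespondence x y xb yb) :
    dtw δ x y ≤ dtw δ' (x.map f) (y.map f) + (x.length + y.length) * ε := by
  rw [← sub_le_iff_le_add]
  obtain ⟨xb₀, yb₀, h₀⟩ := hxy
  refine le_dtw ⟨_, _, h₀.map f⟩ fun ub vb hc => ?_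
  obtain ⟨ub', vb', hc', hlen', hcost'⟩ := hc.exists_length_le hδ'
  obtain ⟨xb, yb, hcorr, rfl, rfl⟩ := hc'.exists_of_map
  have hlen : (xb.length : ℝ) ≤ x.length + y.length := by
    simpa using (Nat.cast_le (α := ℝ)).mpr hlen'
  calc dtw δ x y - (x.length + y.length) * ε
      ≤ corrCost δ xb yb - xb.length * ε := by
        gcongr
        exact dtw_le_corrCost hδ hcorr
    _ ≤ corrCost δ' (xb.map f) (yb.map f) := by
        rw [corrCost_map]
        linarith [corrCost_le_corrCost_add hf hcorr.2.2]
    _ ≤ corrCost δ' ub vb := hcost'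

end Warping

/-- If dtw(x, y) > nr then dtw(s_r(x), s_r(y)) > nr/2. -/
theorem dtw_sr_gt {σ : Type*} (T : WSTree σ) (r : ℝ) (hr : 1 ≤ r)
    (n : ℕ) (x y : List σ) (hx : x.length ≤ n) (hy : y.length ≤ n)
    (h : (n : ℝ) * r < dtw T.tdist x y) :
    (n : ℝ) * r / 2 < dtw T.tdist (x.map (T.sr r)) (y.map (T.sr r)) := by
  have hr₀ : 0 ≤ r := by linarith
  have hxy : ∃ xb yb, IsCorrespondence x y xb yb := by
    by_contra hno
    simp only [not_exists] at hno
    rw [dtw_eq_zero_of_forall_not hno] at h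
    exact h.not_ge (mul_nonneg n.cast_nonneg hr₀)
  have hletter (a b : σ) : T.tdist a b ≤ T.tdist (T.sr r a) (T.sr r b) + r / 4 :=
    (T.tdist_le_max_tdist_sr hr₀ a b).trans
      (max_le_add_of_nonneg (T.tdist_nonneg _ _) (by positivity))
  have hdtw := dtw_le_dtw_map_add T.tdist_nonneg T.tdist_nonneg (by positivity) hletter hxy
  have hloss : (x.length + y.length : ℝ) * (r / 4) ≤ n * r / 2 := by
    have hlen : (x.length + y.length : ℝ) ≤ 2 * n := by
      exact_mod_cast (by omega : x.length + y.length ≤ 2 * n)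
    nlinarith
  linarith
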